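/- arXiv:0808.2679 — 4 statements merged into one kernel-verified Lean document; each statement's English description precedes it below -/
import Mathlib

section
/- Let K be a number field and β ∈ K with β ≠ 0 and β not a root of unity. Then the set {β' ∈ K : β'^m = β for some positive integer m} is finite. -/
/-! Choose `c ≠ 0` in `ℤ` with `c • β` integral. If `β' ^ m = β` with `m ≥ 1`, then
`(c • β') ^ m = c ^ (m - 1) • (c • β)` is integral, hence so is `c • β'`, and every conjugate of
`β'` has absolute value at most `max 1 |σ β|`. So the elements `c • β'` are algebraic integers of
bounded house, of which there are only finitely many. -/

theorem IsIntegral.smul_of_pow_eq {R A : Type*} [CommRing R] [CommRing A] [Algebra R A]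
    {c : R} {x y : A} {m : ℕ} (hy : IsIntegral R (c • y)) (hm : m ≠ 0) (h : x ^ m = y) :
    IsIntegral R (c • x) := by
  refine .of_pow (Nat.pos_of_ne_zero hm) ?_
  have hpow : (c • x) ^ m = c ^ (m - 1) • (c • y) := by
    rw [smul_pow, h, smul_smul, ← pow_succ, Nat.sub_add_cancel (Nat.pos_of_ne_zero hm)]
  rw [hpow]
  exact hy.smul _

theorem norm_le_max_one_of_pow_eq {𝕜 : Type*} [NormedDivisionRing 𝕜] {x y : 𝕜} {m : ℕ}
    (hm : m ≠ 0) (h : x ^ m = y) : ‖x‖ ≤ max 1 ‖y‖ := by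
  rcases le_or_gt ‖x‖ 1 with hx | hx
  · exact le_max_of_le_left hx
  · rw [← h, norm_pow]
    exact le_max_of_le_right (le_self_pow₀ hx.le hm)

theorem NumberField.finite_of_isIntegral_smul_of_norm_le (K : Type*) [Field K] [NumberField K]
    {c : ℤ} (hc : c ≠ 0) (r : ℝ) :
    {x : K | IsIntegral ℤ (c • x) ∧ ∀ φ : K →+* ℂ, ‖φ x‖ ≤ r}.Finite := by
  refine ((Embeddings.finite_of_norm_le K ℂ (|(c : ℝ)| * r)).image (· / (c : K))).subset ?_
  rintro x ⟨hint, hnorm⟩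
  refine ⟨c • x, ⟨hint, fun φ => ?_⟩, ?_⟩
  · rw [zsmul_eq_mul, map_mul, map_intCast, norm_mul, Complex.norm_intCast]
    exact mul_le_mul_of_nonneg_left (hnorm φ) (abs_nonneg _)
  · have hcK : (c : K) ≠ 0 := Int.cast_ne_zero.mpr hc
    simp only [zsmul_eq_mul]
    field_simp

theorem stmt1_general (K : Type*) [Field K] [NumberField K] (β : K) :
    {β' : K | ∃ m : ℕ, 1 ≤ m ∧ β' ^ m = β}.Finite := by
  have hβalg : IsAlgebraic ℤ β :=
    (IsFractionRing.isAlgebraic_iff ℤ ℚ K).mpr (Algebra.IsAlgebraic.isAlgebraic β)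
  obtain ⟨c, hc, hcβ⟩ := hβalg.exists_integral_multiple
  obtain ⟨B, hB⟩ := (Set.finite_range fun σ : K →+* ℂ => ‖σ β‖).bddAbove
  refine (NumberField.finite_of_isIntegral_smul_of_norm_le K hc (max 1 B)).subset ?_
  rintro β' ⟨m, hm, hβ'⟩
  have hm0 : m ≠ 0 := Nat.one_le_iff_ne_zero.mp hm
  refine ⟨hcβ.smul_of_pow_eq hm0 hβ', fun φ => ?_⟩
  calc ‖φ β'‖ ≤ max 1 ‖φ β‖ := norm_le_max_one_of_pow_eq hm0 (by rw [← map_pow, hβ'])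
    _ ≤ max 1 B := max_le_max le_rfl (hB ⟨φ, rfl⟩)

/-- Let `K` be a number field and `β ∈ K` nonzero and not a root of unity.
Then the set of roots of `β` lying in `K` is finite. -/
theorem stmt1 (K : Type*) [Field K] [NumberField K] (β : K) (hβ0 : β ≠ 0)
    (hβ : ∀ n : ℕ, 1 ≤ n → β ^ n ≠ 1) :
    {β' : K | ∃ m : ℕ, 1 ≤ m ∧ β' ^ m = β}.Finite :=
  stmt1_general K β
end

section
/- Let d ≥ 2, n ≥ 0, β an algebraic number not preperiodic under φ of degree d with canonical height ĥ_φ, and assume the Dynamical Lehmer bound ĥ_φ(α) > C/[K(α):K] for non-preperiodic α. If the polynomial φ_{n,β}(z) (whose roots are exactly φ^{-n}(β)) has degree at most d^n and splits into μ irreducible factors over K, then μ ≤ ĥ_φ(β)/C. -/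
/-!
If `γ` is a root of a factor of `φ_{n,β}` of minimal degree, then `[K(γ):K] ≤ d ^ n / μ`, `γ` is
not preperiodic because its `n`-th iterate `β` is not, and `ĥ_φ(γ) = ĥ_φ(β) / d ^ n`. The Lehmer
bound for `γ` then reads `C μ / d ^ n ≤ C / [K(γ):K] < ĥ_φ(β) / d ^ n`.
-/

open Polynomial IntermediateField

theorem Function.apply_iterate_eq_pow_mul {α M : Type*} [Monoid M] {f : α → α} {h : α → M}
    {c : M} (hf : ∀ x, h (f x) = c * h x) (m : ℕ) (x : α) :
    h (f^[m] x) = c ^ m * h x := by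
  rw [Function.Semiconj.iterate_right hf m x, mul_left_iterate]

theorem Set.Finite.range_iterate_of_iterate_eq {α : Type*} {f : α → α} {x y : α} {n : ℕ}
    (hxy : f^[n] x = y) (hx : (Set.range fun m => f^[m] x).Finite) :
    (Set.range fun m => f^[m] y).Finite :=
  hx.subset <| Set.range_subset_iff.2 fun m =>
    ⟨m + n, by simp only [Function.iterate_add_apply, hxy]⟩

theorem Polynomial.exists_card_mul_natDegree_le_natDegree_prod {K ι : Type*} [Field K]
    [Fintype ι] [Nonempty ι] (fs : ι → K[X]) (hfs : ∀ i, fs i ≠ 0) :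
    ∃ i, Fintype.card ι * (fs i).natDegree ≤ (∏ j, fs j).natDegree := by
  obtain ⟨i, -, hmin⟩ := Finset.exists_min_image Finset.univ (fun j => (fs j).natDegree)
    Finset.univ_nonempty
  refine ⟨i, ?_⟩
  rw [natDegree_prod _ _ fun j _ => hfs j, ← smul_eq_mul]
  exact Finset.card_nsmul_le_sum _ _ _ hmin

theorem Polynomial.exists_aeval_eq_zero_finrank_adjoin_le {K L : Type*} [Field K] [Field L]
    [IsAlgClosed L] [Algebra K L] {f : K[X]} (hf : 0 < f.natDegree) :
    ∃ γ : L, aeval γ f = 0 ∧ Module.finrank K K⟮γ⟯ ≤ f.natDegree := by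
  have hf0 : f ≠ 0 := ne_zero_of_natDegree_gt hf
  obtain ⟨γ, hγ⟩ := IsAlgClosed.exists_aeval_eq_zero L f
    (by rw [degree_eq_natDegree hf0]; exact_mod_cast hf.ne')
  have hint : IsIntegral K γ := (isAlgebraic_of_mem_rootSet
    (p := f) (by simp [mem_rootSet, hf0, hγ])).isIntegral
  refine ⟨γ, hγ, ?_⟩
  rw [adjoin.finrank hint]
  exact natDegree_le_of_dvd (minpoly.dvd K γ hγ) hf0

theorem Polynomial.exists_aeval_prod_eq_zero_card_mul_finrank_adjoin_le {K L ι : Type*}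
    [Field K] [Field L] [IsAlgClosed L] [Algebra K L] [Fintype ι] [Nonempty ι]
    (fs : ι → K[X]) (hirr : ∀ i, Irreducible (fs i)) :
    ∃ γ : L, aeval γ (∏ i, fs i) = 0 ∧
      Fintype.card ι * Module.finrank K K⟮γ⟯ ≤ (∏ i, fs i).natDegree := by
  obtain ⟨i, hi⟩ := exists_card_mul_natDegree_le_natDegree_prod fs fun i => (hirr i).ne_zero
  obtain ⟨γ, hγ, hdeg⟩ := exists_aeval_eq_zero_finrank_adjoin_le (L := L) (hirr i).natDegree_pos
  refine ⟨γ, ?_, (Nat.mul_le_mul_left _ hdeg).trans hi⟩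
  rw [map_prod]
  exact Finset.prod_eq_zero (Finset.mem_univ i) hγ

theorem stmt6_general (K : Type*) [Field K] (d : ℕ)
    (φ : AlgebraicClosure K → AlgebraicClosure K)
    (hcan : AlgebraicClosure K → ℝ)
    (hfunc : ∀ x, hcan (φ x) = d * hcan x)
    (C : ℝ) (hC : 0 < C)
    (hLehmer : ∀ α : AlgebraicClosure K, ¬(Set.range fun n : ℕ => φ^[n] α).Finite →
      C / (Module.finrank K (IntermediateField.adjoin K {α}) : ℝ) < hcan α)
    (b : K)
    (hb : ¬(Set.range fun n : ℕ =>
        φ^[n] (algebraMap K (AlgebraicClosure K) b)).Finite)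
    (n : ℕ) (P : Polynomial K) (hPdeg : P.natDegree ≤ d ^ n)
    (hProots : ∀ γ : AlgebraicClosure K,
      Polynomial.aeval γ P = 0 ↔ φ^[n] γ = algebraMap K (AlgebraicClosure K) b)
    (μ : ℕ) (hμ : 1 ≤ μ) (fs : Fin μ → Polynomial K)
    (hirr : ∀ i, Irreducible (fs i)) (hfac : P = ∏ i, fs i) :
    (μ : ℝ) ≤ hcan (algebraMap K (AlgebraicClosure K) b) / C := by
  subst hfac
  have : Nonempty (Fin μ) := Fin.pos_iff_nonempty.1 hμ
  obtain ⟨γ, hγ, hdeg⟩ :=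
    exists_aeval_prod_eq_zero_card_mul_finrank_adjoin_le (L := AlgebraicClosure K) fs hirr
  rw [Fintype.card_fin] at hdeg
  have hγb := (hProots γ).1 hγ
  have hLγ := hLehmer γ fun hfin => hb (hfin.range_iterate_of_iterate_eq hγb)
  set D := Module.finrank K K⟮γ⟯
  have := adjoin.finiteDimensional (Algebra.IsIntegral.isIntegral (R := K) γ)
  have hD : (0 : ℝ) < D := by exact_mod_cast Module.finrank_pos
  have hμD : (μ : ℝ) * D ≤ d ^ n := by exact_mod_cast hdeg.trans hPdeg
  rw [le_div_iff₀ hC]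
  calc (μ : ℝ) * C = μ * D * (C / D) := by field_simp
    _ ≤ d ^ n * hcan γ := mul_le_mul hμD hLγ.le (by positivity) (by positivity)
    _ = hcan (algebraMap K _ b) := by
      rw [← hγb, Function.apply_iterate_eq_pow_mul hfunc]

/-- Under the Dynamical Lehmer bound, if the polynomial `P = φ_{n,β}` (whose
roots are exactly `φ^{-n}(β)`) has degree at most `d ^ n` and splits into `μ`
irreducible factors over `K`, then `μ ≤ ĥ_φ(β) / C`. -/
theorem stmt6 (K : Type*) [Field K] [NumberField K] (d : ℕ) (hd : 2 ≤ d)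
    (φ : AlgebraicClosure K → AlgebraicClosure K)
    (hcan : AlgebraicClosure K → ℝ)
    (hfunc : ∀ x, hcan (φ x) = d * hcan x)
    (C : ℝ) (hC : 0 < C)
    (hLehmer : ∀ α : AlgebraicClosure K, ¬(Set.range fun n : ℕ => φ^[n] α).Finite →
      C / (Module.finrank K (IntermediateField.adjoin K {α}) : ℝ) < hcan α)
    (b : K)
    (hb : ¬(Set.range fun n : ℕ =>
        φ^[n] (algebraMap K (AlgebraicClosure K) b)).Finite)
    (n : ℕ) (P : Polynomial K) (hPdeg : P.natDegree ≤ d ^ n)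
    (hProots : ∀ γ : AlgebraicClosure K,
      Polynomial.aeval γ P = 0 ↔ φ^[n] γ = algebraMap K (AlgebraicClosure K) b)
    (μ : ℕ) (hμ : 1 ≤ μ) (fs : Fin μ → Polynomial K)
    (hirr : ∀ i, Irreducible (fs i)) (hfac : P = ∏ i, fs i) :
    (μ : ℝ) ≤ hcan (algebraMap K (AlgebraicClosure K) b) / C :=
  stmt6_general K d φ hcan hfunc C hC hLehmer b hb n P hPdeg hProots μ hμ fs hirr hfac
end

section
/- Let φ be a rational map over K commuting with the Galois action of Gal(K̄/K), and let β ∈ ℙ¹(K). Suppose the number of Gal(K̄/K)-orbits on φ^{-n}(β) is bounded by a constant B for all n ≥ 0. Then there exists l ≥ 0 such that for every β' ∈ φ^{-l}(β) and every m ≥ 0, the set φ^{-m}(β') is contained in a single Gal(K̄/K)-orbit. -/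
/-- If the number of Galois orbits on `φ^{-n}(β)` is bounded by `B` for all
`n`, then there is an `l` such that for every `β' ∈ φ^{-l}(β)` and every `m`,
the set `φ^{-m}(β')` lies in a single Galois orbit. -/
theorem stmt13 (K : Type*) [Field K] [NumberField K]
    (φ : AlgebraicClosure K → AlgebraicClosure K)
    (hcomm : ∀ (σ : AlgebraicClosure K ≃ₐ[K] AlgebraicClosure K) x,
      φ (σ x) = σ (φ x))
    (hsurj : Function.Surjective φ)
    (hfin : ∀ y : AlgebraicClosure K, (φ ⁻¹' {y}).Finite)
    (β : AlgebraicClosure K) (B : ℕ)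
    (hB : ∀ n : ℕ, ∃ T : Finset (AlgebraicClosure K), T.card ≤ B ∧
      ∀ x, φ^[n] x = β →
        ∃ t ∈ T, ∃ σ : AlgebraicClosure K ≃ₐ[K] AlgebraicClosure K, σ t = x) :
    ∃ l : ℕ, ∀ β', φ^[l] β' = β → ∀ m : ℕ, ∀ x y,
      φ^[m] x = β' → φ^[m] y = β' →
      ∃ σ : AlgebraicClosure K ≃ₐ[K] AlgebraicClosure K, σ x = y := by
  classical
  have hcommn : ∀ (σ : AlgebraicClosure K ≃ₐ[K] AlgebraicClosure K) (n : ℕ) x,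
      φ^[n] (σ x) = σ (φ^[n] x) := by
    intro σ n
    induction n with
    | zero => intro x; simp
    | succ n ih =>
        intro x
        rw [Function.iterate_succ_apply', Function.iterate_succ_apply', ih, hcomm]
  set Covers : ℕ → Finset (AlgebraicClosure K) → Prop :=
    fun n T => ∀ x, φ^[n] x = β → ∃ t ∈ T,
      ∃ σ : AlgebraicClosure K ≃ₐ[K] AlgebraicClosure K, σ t = x with hCovers
  set f : ℕ → ℕ := fun n => sInf {k | ∃ T, Covers n T ∧ T.card = k} with hf
  have hne : ∀ n, {k | ∃ T, Covers n T ∧ T.card = k}.Nonempty := by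
    intro n
    obtain ⟨T, hTc, hcov⟩ := hB n
    exact ⟨T.card, T, hcov, rfl⟩
  have hfB : ∀ n, f n ≤ B := by
    intro n
    obtain ⟨T, hTc, hcov⟩ := hB n
    exact le_trans (Nat.sInf_le ⟨T, hcov, rfl⟩) hTc
  -- pick l maximizing f
  have hbdd : BddAbove (Set.range f) := ⟨B, by rintro k ⟨n, rfl⟩; exact hfB n⟩
  obtain ⟨l, hl⟩ := Nat.sSup_mem (Set.range_nonempty f) hbdd
  have hlmax : ∀ n, f n ≤ f l := by
    intro n
    rw [hl]
    exact le_csSup hbdd ⟨n, rfl⟩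
  refine ⟨l, ?_⟩
  intro β' hβ' m x y hx hy
  by_contra hcon
  push_neg at hcon
  obtain ⟨T, hTcov, hTcard⟩ : ∃ T, Covers (l + m) T ∧ T.card = f (l + m) :=
    Nat.sInf_mem (hne (l + m))
  have hxlm : φ^[l + m] x = β := by
    rw [Function.iterate_add_apply, hx, hβ']
  have hylm : φ^[l + m] y = β := by
    rw [Function.iterate_add_apply, hy, hβ']
  obtain ⟨t₁, ht₁T, σ₁, hσ₁⟩ := hTcov x hxlm
  obtain ⟨t₂, ht₂T, σ₂, hσ₂⟩ := hTcov y hylm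
  have hne12 : t₁ ≠ t₂ := by
    rintro rfl
    refine hcon (σ₁.symm.trans σ₂) ?_
    rw [AlgEquiv.trans_apply, ← hσ₁, AlgEquiv.symm_apply_apply, hσ₂]
  -- t₁ and t₂ have conjugate images under φ^[m]
  have himg1 : σ₁ (φ^[m] t₁) = β' := by rw [← hcommn, hσ₁, hx]
  have himg2 : φ^[m] t₂ = σ₂.symm β' := by
    rw [← hy, ← hσ₂, hcommn, AlgEquiv.symm_apply_apply]
  set S : Finset (AlgebraicClosure K) := (T.erase t₂).image φ^[m] with hS
  have hScov : Covers l S := by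
    intro z hz
    obtain ⟨z', hz'⟩ := (hsurj.iterate m) z
    have hz'β : φ^[l + m] z' = β := by rw [Function.iterate_add_apply, hz', hz]
    obtain ⟨t, htT, σ, hσ⟩ := hTcov z' hz'β
    by_cases ht : t = t₂
    · subst ht
      refine ⟨φ^[m] t₁, Finset.mem_image_of_mem _ (Finset.mem_erase.2 ⟨hne12, ht₁T⟩),
        ((σ₁.trans σ₂.symm).trans σ), ?_⟩
      rw [AlgEquiv.trans_apply, AlgEquiv.trans_apply, himg1, ← himg2, ← hcommn, hσ, hz']
    · refine ⟨φ^[m] t, Finset.mem_image_of_mem _ (Finset.mem_erase.2 ⟨ht, htT⟩), σ, ?_⟩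
      rw [← hcommn, hσ, hz']
  have hflS : f l ≤ S.card := Nat.sInf_le ⟨S, hScov, rfl⟩
  have hScard : S.card ≤ T.card - 1 := by
    calc S.card ≤ (T.erase t₂).card := Finset.card_image_le
    _ = T.card - 1 := Finset.card_erase_of_mem ht₂T
  have hTpos : 1 ≤ T.card := Finset.card_pos.2 ⟨t₁, ht₁T⟩
  have hTf : T.card ≤ f l := hTcard ▸ hlmax (l + m)
  omega
end

section
/- (Kronecker) Let α be a nonzero algebraic number. Then the absolute logarithmic Weil height h(α) = 0 if and only if α is a root of unity. -/
open IntermediateField in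
/-- The absolute logarithmic Weil height of an algebraic number `α`:
`h(α) = (log |a_d| + ∑_σ log⁺ |σ α|) / d`, where `d = [ℚ(α) : ℚ]`, `σ` runs
over the embeddings of `ℚ(α)` into `ℂ`, and `a_d` is the leading coefficient
of the primitive integral minimal polynomial of `α`. -/
noncomputable def weilHeight (α : AlgebraicClosure ℚ) : ℝ :=
  haveI : FiniteDimensional ℚ ℚ⟮α⟯ :=
    IntermediateField.adjoin.finiteDimensional ((AlgebraicClosure.isAlgebraic ℚ).isAlgebraic α).isIntegral
  haveI : NumberField ℚ⟮α⟯ := ⟨⟩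
  (Real.log
      (((IsLocalization.integerNormalization (nonZeroDivisors ℤ)
          (minpoly ℚ α)).primPart.leadingCoeff.natAbs : ℝ)) +
    ∑ σ : ℚ⟮α⟯ →+* ℂ,
      max 0 (Real.log ‖σ (IntermediateField.AdjoinSimple.gen ℚ α)‖)) /
    (minpoly ℚ α).natDegree

/-!
`h(α)` is a sum of two nonnegative terms divided by the degree. The first, `log |a_d|`, vanishes
iff the primitive integral minimal polynomial is monic up to sign, i.e. (Gauss's lemma) iff `α` is
an algebraic integer; the second vanishes iff every conjugate of `α` lies in the closed unit disc.
A nonzero algebraic integer with all conjugates in the closed unit disc is a root of unity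
(Kronecker): its powers are algebraic integers of bounded degree with bounded conjugates, so there
are only finitely many of them. Conversely, a root of unity is integral with all conjugates of
absolute value one.
-/

open Polynomial IntermediateField
open scoped nonZeroDivisors Real

theorem IsIntegral.of_aeval_eq_zero_of_isUnit_leadingCoeff {R A : Type*} [CommRing R] [Ring A]
    [Algebra R A] {p : R[X]} (hp : IsUnit p.leadingCoeff) {a : A} (ha : aeval a p = 0) :
    IsIntegral R a :=
  ⟨_, monic_of_isUnit_leadingCoeff_inv_smul hp, by
    rw [← aeval_def, Units.smul_def, map_smul, ha, smul_zero]⟩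

theorem isIntegral_iff_isUnit_leadingCoeff_primPart_integerNormalization
    {R K L : Type*} [CommRing R] [IsDomain R] [NormalizedGCDMonoid R] [Field K] [Algebra R K]
    [IsFractionRing R K] [Field L] [Algebra R L] [Algebra K L] [IsScalarTower R K L]
    {α : L} (hα : IsIntegral K α) :
    IsIntegral R α ↔
      IsUnit (IsLocalization.integerNormalization R⁰ (minpoly K α)).primPart.leadingCoeff := by
  set N := IsLocalization.integerNormalization R⁰ (minpoly K α)
  refine ⟨fun hαR ↦ ?_, fun hu ↦ ?_⟩
  · obtain ⟨b, hb, hNb⟩ := IsLocalization.integerNormalization_spec R⁰ (minpoly K α)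
    have hdvd : N.primPart ∣ minpoly R α := by
      rw [N.isPrimitive_primPart.dvd_iff_fraction_map_dvd_fraction_map K,
        ← minpoly.isIntegrallyClosed_eq_field_fractions' K hαR]
      refine (Polynomial.map_dvd _ N.primPart_dvd).trans ?_
      rw [hNb, ← IsScalarTower.algebraMap_smul K b, smul_eq_C_mul]
      have hbK : algebraMap R K b ≠ 0 :=
        IsFractionRing.to_map_ne_zero_of_mem_nonZeroDivisors hb
      exact (isUnit_C.mpr hbK.isUnit).mul_left_dvd.mpr dvd_rfl
    exact (minpoly.monic hαR).isUnit_leadingCoeff_of_dvd hdvd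
  · have hinj : Function.Injective (algebraMap R L) := by
      rw [IsScalarTower.algebraMap_eq R K L]
      exact (algebraMap K L).injective.comp (IsFractionRing.injective R K)
    have hN : N ≠ 0 := by
      rw [Ne, IsLocalization.integerNormalization_eq_zero_iff le_rfl]
      exact minpoly.ne_zero hα
    refine IsIntegral.of_aeval_eq_zero_of_isUnit_leadingCoeff hu ?_
    exact eval₂_primPart_eq_zero hinj hN
      (IsLocalization.integerNormalization_aeval_eq_zero _ _ (minpoly.aeval K α))

theorem Real.log_natCast_eq_zero_iff {n : ℕ} (hn : n ≠ 0) : Real.log n = 0 ↔ n = 1 := by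
  rw [Real.log_eq_zero]
  have : (n : ℝ) ≠ -1 := by linarith [n.cast_nonneg (α := ℝ)]
  simp [hn, this]

theorem Real.sum_posLog_eq_zero_iff {ι : Type*} {s : Finset ι} {f : ι → ℝ} :
    ∑ i ∈ s, log⁺ (f i) = 0 ↔ ∀ i ∈ s, |f i| ≤ 1 := by
  rw [Finset.sum_eq_zero_iff_of_nonneg fun i _ ↦ Real.posLog_nonneg]
  simp only [Real.posLog_eq_zero_iff]

theorem NumberField.exists_pow_eq_one_iff_isIntegral_and_norm_le_one {K : Type*} [Field K]
    [NumberField K] {x : K} (hx : x ≠ 0) :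
    (∃ n, 0 < n ∧ x ^ n = 1) ↔ IsIntegral ℤ x ∧ ∀ φ : K →+* ℂ, ‖φ x‖ ≤ 1 := by
  refine ⟨fun ⟨n, hn, hxn⟩ ↦ ⟨?_, fun φ ↦ ?_⟩, fun ⟨hxi, hxφ⟩ ↦ ?_⟩
  · exact IsIntegral.of_pow hn (hxn ▸ isIntegral_one)
  · exact (Complex.norm_eq_one_of_pow_eq_one (by rw [← map_pow, hxn, map_one]) hn.ne').le
  · obtain ⟨n, hn, hxn⟩ := Embeddings.pow_eq_one_of_norm_le_one K ℂ hx hxi hxφ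
    exact ⟨n, hn, hxn⟩

instance (α : AlgebraicClosure ℚ) : NumberField ℚ⟮α⟯ where
  to_finiteDimensional :=
    adjoin.finiteDimensional ((AlgebraicClosure.isAlgebraic ℚ).isAlgebraic α).isIntegral

theorem weilHeight_eq_zero_iff (α : AlgebraicClosure ℚ) :
    weilHeight α = 0 ↔ IsIntegral ℤ α ∧ ∀ σ : ℚ⟮α⟯ →+* ℂ, ‖σ (AdjoinSimple.gen ℚ α)‖ ≤ 1 := by
  have hα : IsIntegral ℚ α := ((AlgebraicClosure.isAlgebraic ℚ).isAlgebraic α).isIntegral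
  have hdeg : ((minpoly ℚ α).natDegree : ℝ) ≠ 0 := by
    exact_mod_cast (minpoly.natDegree_pos hα).ne'
  have hlc :
      (IsLocalization.integerNormalization ℤ⁰ (minpoly ℚ α)).primPart.leadingCoeff.natAbs ≠ 0 :=
    Int.natAbs_ne_zero.mpr (leadingCoeff_ne_zero.mpr (primPart_ne_zero _))
  rw [weilHeight, div_eq_zero_iff, or_iff_left hdeg]
  change _ + ∑ σ : ℚ⟮α⟯ →+* ℂ, log⁺ ‖σ (AdjoinSimple.gen ℚ α)‖ = 0 ↔ _
  rw [add_eq_zero_iff_of_nonneg (Real.log_natCast_nonneg _)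
      (Finset.sum_nonneg fun _ _ ↦ Real.posLog_nonneg), Real.log_natCast_eq_zero_iff hlc,
    ← Int.isUnit_iff_natAbs_eq,
    ← isIntegral_iff_isUnit_leadingCoeff_primPart_integerNormalization hα,
    Real.sum_posLog_eq_zero_iff]
  simp only [Finset.mem_univ, abs_norm, forall_const]

/-- Kronecker's theorem: a nonzero algebraic number has Weil height zero if
and only if it is a root of unity. -/
theorem stmt17 (α : AlgebraicClosure ℚ) (hα : α ≠ 0) :
    weilHeight α = 0 ↔ ∃ n : ℕ, 1 ≤ n ∧ α ^ n = 1 := by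
  have hgen : AdjoinSimple.gen ℚ α ≠ 0 := by simpa [← Subtype.coe_ne_coe] using hα
  have hint : IsIntegral ℤ α ↔ IsIntegral ℤ (AdjoinSimple.gen ℚ α) := by
    rw [← coe_isIntegral_iff, AdjoinSimple.coe_gen]
  rw [weilHeight_eq_zero_iff, hint]
  refine (NumberField.exists_pow_eq_one_iff_isIntegral_and_norm_le_one hgen).symm.trans ?_
  simp [Nat.one_le_iff_ne_zero, Nat.pos_iff_ne_zero, ← Subtype.coe_inj]
end
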